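/- arXiv:1009.5208 — 3 statements merged into one kernel-verified Lean document; each statement's English description precedes it below -/
import Mathlib

section
/- Let 𝓏 : ℝ × ℝ^d → ℝ^d be a flow satisfying the homogeneity scaling property 𝓏(t, λ·z₀) = λ·𝓏(λ^ξ·t, z₀) for all λ > 0, t ∈ ℝ, z₀ ∈ ℝ^d, where ξ ∈ ℝ, and let Γ : ℝ^d → ℝ be homogeneous of degree ϑ ∈ ℝ. Then Γ(𝓏(t, λ·z₀)) = λ^ϑ·Γ(𝓏(λ^ξ·t, z₀)) for all t, λ > 0, z₀; consequently {t > 0 : Γ(𝓏(t, λ·z₀)) = 0} = λ^(−ξ)·{t > 0 : Γ(𝓏(t, z₀)) = 0} and the inter-execution time satisfies τ(λ·z₀) = λ^(−ξ)·τ(z₀), independently of the degree ϑ of Γ. -/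
open Pointwise


/-- Scaling of triggering times for a homogeneous triggering function `Γ` of degree `ϑ`
along a flow with the homogeneity scaling property.  One has
`Γ (𝓏 t (l • z₀)) = l ^ ϑ * Γ (𝓏 (l ^ ξ * t) z₀)`, the set of triggering times of
`l • z₀` is the `l ^ (-ξ)`-rescaling of that of `z₀`, and the inter-execution time
`τ z = sInf {t > 0 : Γ (𝓏 t z) = 0}` satisfies `τ (l • z₀) = l ^ (-ξ) * τ z₀`,
independently of the degree `ϑ`. -/
theorem triggering_time_scaling_homogeneous {d : ℕ} (ξ ϑ : ℝ)
    (𝓏 : ℝ → (Fin d → ℝ) → (Fin d → ℝ))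
    (hscale : ∀ l : ℝ, 0 < l → ∀ (t : ℝ) (z₀ : Fin d → ℝ),
      𝓏 t (l • z₀) = l • 𝓏 (l ^ ξ * t) z₀)
    (Γ : (Fin d → ℝ) → ℝ)
    (hΓ : ∀ l : ℝ, 0 < l → ∀ z : Fin d → ℝ, Γ (l • z) = l ^ ϑ * Γ z)
    (l : ℝ) (hl : 0 < l) (z₀ : Fin d → ℝ) :
    (∀ t : ℝ, Γ (𝓏 t (l • z₀)) = l ^ ϑ * Γ (𝓏 (l ^ ξ * t) z₀)) ∧
    {t : ℝ | 0 < t ∧ Γ (𝓏 t (l • z₀)) = 0} =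
      (fun t : ℝ => l ^ (-ξ) * t) '' {t : ℝ | 0 < t ∧ Γ (𝓏 t z₀) = 0} ∧
    sInf {t : ℝ | 0 < t ∧ Γ (𝓏 t (l • z₀)) = 0} =
      l ^ (-ξ) * sInf {t : ℝ | 0 < t ∧ Γ (𝓏 t z₀) = 0} := by
  have hpow : (0:ℝ) < l ^ ξ := Real.rpow_pos_of_pos hl ξ
  have hnegpow : (0:ℝ) < l ^ (-ξ) := Real.rpow_pos_of_pos hl (-ξ)
  have hϑpow : (0:ℝ) < l ^ ϑ := Real.rpow_pos_of_pos hl ϑ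
  have hinv : l ^ (-ξ) * l ^ ξ = 1 := by
    rw [← Real.rpow_add hl]; simp
  have h1 : ∀ t : ℝ, Γ (𝓏 t (l • z₀)) = l ^ ϑ * Γ (𝓏 (l ^ ξ * t) z₀) := by
    intro t
    rw [hscale l hl t z₀, hΓ l hl]
  have h2 : {t : ℝ | 0 < t ∧ Γ (𝓏 t (l • z₀)) = 0} =
      (fun t : ℝ => l ^ (-ξ) * t) '' {t : ℝ | 0 < t ∧ Γ (𝓏 t z₀) = 0} := by
    ext t
    simp only [Set.mem_setOf_eq, Set.mem_image]
    constructor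
    · rintro ⟨ht, hΓt⟩
      refine ⟨l ^ ξ * t, ⟨mul_pos hpow ht, ?_⟩, ?_⟩
      · rw [h1 t] at hΓt
        exact (mul_eq_zero.1 hΓt).resolve_left hϑpow.ne'
      · rw [← mul_assoc, hinv, one_mul]
    · rintro ⟨s, ⟨hs, hΓs⟩, rfl⟩
      refine ⟨mul_pos hnegpow hs, ?_⟩
      rw [h1, ← mul_assoc, mul_comm (l ^ ξ), hinv, one_mul, hΓs, mul_zero]
  refine ⟨h1, h2, ?_⟩
  rw [h2]
  have : (fun t : ℝ => l ^ (-ξ) * t) '' {t : ℝ | 0 < t ∧ Γ (𝓏 t z₀) = 0}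
      = l ^ (-ξ) • {t : ℝ | 0 < t ∧ Γ (𝓏 t z₀) = 0} := rfl
  rw [this, Real.sInf_smul_of_nonneg hnegpow.le, smul_eq_mul]
end

section
/- (Theorem 2.) Let Z : ℝ^(2n) → ℝ^(2n), Γ : ℝ^(2n) → ℝ, and ξ ∈ ℝ. Let 𝓏 : ℝ × ℝ^(2n) → ℝ^(2n) be a flow of Z, and let 𝔰 : ℝ × (ℝ^(2n) × (0,∞)) → ℝ^(2n) × (0,∞) be a flow of the homogenized system S(z, w) = (w^(ξ+1)·Z(w⁻¹·z), 0) satisfying: (i) 𝔰(t, (z, 1)) = (𝓏(t, z), 1) for all t, z (φ-relatedness of the flows), and (ii) the homogeneity scaling 𝔰(t, λ·(z, w)) = λ·𝔰(λ^ξ·t, (z, w)) for all λ > 0. Define the inter-execution times τ(z) = sInf {t > 0 : Γ(𝓏(t, z)) = 0} and τ̃(z, w) = sInf {t > 0 : Γ̃(𝔰(t, (z, w))) = 0}, where Γ̃(z, w) = Γ(w⁻¹·z). Then τ(z) = λ^ξ · τ̃(λ·z, λ) for every z ∈ ℝ^(2n) and every λ > 0. -/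
open Pointwise


/-- Theorem 2: relation between the inter-execution times of a system and of its
homogenization.  Let `𝓏` be a flow of `Z` on `ℝ^(2n)` and `𝔰` a flow of the homogenized
system on `ℝ^(2n) × (0, ∞)` that is `φ`-related to `𝓏` (`𝔰 t (z, 1) = (𝓏 t z, 1)`) and
satisfies the homogeneity scaling `𝔰 t (l • (z, w)) = l • 𝔰 (l ^ ξ * t) (z, w)`.
With the homogenized triggering function `Γ̃ (z, w) = Γ (w⁻¹ • z)` and the
inter-execution times `τ z = sInf {t > 0 : Γ (𝓏 t z) = 0}` and
`τ̃ (z, w) = sInf {t > 0 : Γ̃ (𝔰 t (z, w)) = 0}`, one has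
`τ z = l ^ ξ * τ̃ (l • z, l)` for every `z` and every `l > 0`. -/
theorem homogenized_inter_execution_times {n : ℕ} (ξ : ℝ)
    (Γ : (Fin (2 * n) → ℝ) → ℝ)
    (𝓏 : ℝ → (Fin (2 * n) → ℝ) → (Fin (2 * n) → ℝ))
    (𝔰 : ℝ → ((Fin (2 * n) → ℝ) × ℝ) → ((Fin (2 * n) → ℝ) × ℝ))
    (hrel : ∀ (t : ℝ) (z : Fin (2 * n) → ℝ), 𝔰 t (z, 1) = (𝓏 t z, 1))
    (hscale : ∀ l : ℝ, 0 < l → ∀ (t : ℝ) (z : Fin (2 * n) → ℝ) (w : ℝ), 0 < w →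
      𝔰 t (l • (z, w)) = l • 𝔰 (l ^ ξ * t) (z, w))
    (z : Fin (2 * n) → ℝ) (l : ℝ) (hl : 0 < l) :
    sInf {t : ℝ | 0 < t ∧ Γ (𝓏 t z) = 0} =
      l ^ ξ * sInf {t : ℝ | 0 < t ∧
        (fun p : (Fin (2 * n) → ℝ) × ℝ => Γ (p.2⁻¹ • p.1)) (𝔰 t (l • z, l)) = 0} := by
  have hc : (0 : ℝ) < l ^ ξ := Real.rpow_pos_of_pos hl ξ
  have hc' : (l ^ ξ)⁻¹ ≠ 0 := inv_ne_zero hc.ne'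
  -- compute the flow of the homogenized system at (l•z, l)
  have key : ∀ t : ℝ,
      (fun p : (Fin (2 * n) → ℝ) × ℝ => Γ (p.2⁻¹ • p.1)) (𝔰 t (l • z, l))
        = Γ (𝓏 (l ^ ξ * t) z) := by
    intro t
    have h1 : (l • z, l) = l • ((z, (1 : ℝ)) : (Fin (2 * n) → ℝ) × ℝ) := by
      simp [Prod.smul_def]
    rw [h1, hscale l hl t z 1 one_pos, hrel]
    simp [Prod.smul_def, smul_smul, inv_mul_cancel₀ hl.ne']
  -- sets coincide up to scaling
  have hset : {t : ℝ | 0 < t ∧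
      (fun p : (Fin (2 * n) → ℝ) × ℝ => Γ (p.2⁻¹ • p.1)) (𝔰 t (l • z, l)) = 0}
      = (l ^ ξ)⁻¹ • {t : ℝ | 0 < t ∧ Γ (𝓏 t z) = 0} := by
    ext t
    simp only [Set.mem_setOf_eq, key, Set.mem_smul_set_iff_inv_smul_mem₀ hc', inv_inv,
      smul_eq_mul]
    constructor
    · rintro ⟨ht, hΓ⟩
      exact ⟨mul_pos hc ht, hΓ⟩
    · rintro ⟨ht, hΓ⟩
      exact ⟨(mul_pos_iff_of_pos_left hc).mp ht, hΓ⟩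
  rw [hset, Real.sInf_smul_of_nonneg (inv_nonneg.mpr hc.le), smul_eq_mul,
    ← mul_assoc, mul_inv_cancel₀ hc.ne', one_mul]
end

section
/- (Lemma 2: linear comparison bound for the triggering condition.) Let M ⊆ ℝ^d, let Z : ℝ^d → ℝ^d be C^(p−1) and Γ : ℝ^d → ℝ be C^p, and let χ₀, …, χ_{p−1} ∈ ℝ with χ_i ≥ 0 for i = 0, …, p−2 satisfy the differential inequality L_Z^p Γ(z) ≤ Σ_{i=0}^{p−1} χ_i · L_Z^i Γ(z) for every z ∈ M. Let 𝓏(·, z₀) be a solution of ż = Z(z) with 𝓏(0, z₀) = z₀ that remains in M for all t ∈ [0, T]. Let y : [0, T] → ℝ^p be the solution of the linear system ẏ_i = y_{i+1} (i = 1, …, p−1), ẏ_p = Σ_{i=0}^{p−1} χ_i · y_{i+1}, with initial condition y(0) = (Γ(z₀), L_Z Γ(z₀), …, L_Z^(p−1) Γ(z₀)). Then Γ(𝓏(t, z₀)) ≤ y₁(t) for all t ∈ [0, T]; more precisely, L_Z^(i−1) Γ(𝓏(t, z₀)) ≤ y_i(t) for every i = 1, …, p and t ∈ [0, T]. -/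
/-!
Along the trajectory, the error `u t = (L_Z^i Γ (𝓏 t) - y_i t)_i` satisfies `u' ≤ C u`, where `C`
is the companion matrix of `χ`: with equality in the first `p - 1` rows and by the differential
inequality in the last one. Since `C` is Metzler (nonnegative off the diagonal), such a
differential inequality preserves `u ≤ 0`. Fence every component of `u` by `ε e^{K t}`, with `K`
larger than every absolute row sum of `C`: where a component touches the fence, its slope is at
most that row sum times `ε e^{K t}`, less than the slope of the fence, so it never crosses it.
Then let `ε → 0`.
-/

/-- The Lie derivative of `g` along the vector field `Z`: `L_Z g (z) = Dg(z) (Z z)`. -/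
noncomputable def lieDeriv {E : Type*} [NormedAddCommGroup E] [NormedSpace ℝ E]
    (Z : E → E) (g : E → ℝ) : E → ℝ :=
  fun z => fderiv ℝ g z (Z z)

/-- Iterated Lie derivatives: `L_Z^0 g = g`, `L_Z^(k+1) g = L_Z (L_Z^k g)`. -/
noncomputable def lieDerivIter {E : Type*} [NormedAddCommGroup E] [NormedSpace ℝ E]
    (Z : E → E) (g : E → ℝ) : ℕ → E → ℝ
  | 0 => g
  | k + 1 => lieDeriv Z (lieDerivIter Z g k)

open Set Filter Topology Matrix

theorem HasDerivWithinAt.eventually_nhdsGT_lt_of_neg {g : ℝ → ℝ} {g' x : ℝ}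
    (hg : HasDerivWithinAt g g' (Ici x) x) (hg' : g' < 0) : ∀ᶠ z in 𝓝[>] x, g z < g x := by
  filter_upwards [hg.Ioi_of_Ici.limsup_slope_le' (lt_irrefl x) hg', self_mem_nhdsWithin]
    with z hslope hz
  rw [slope_def_field, div_neg_iff] at hslope
  rcases hslope with ⟨-, hz'⟩ | ⟨hgz, -⟩
  · exact absurd hz (not_lt.2 (sub_neg.1 hz').le)
  · exact sub_neg.1 hgz

theorem image_le_of_deriv_right_lt_deriv_boundary_pi {ι : Type*} [Fintype ι]
    {f f' : ℝ → ι → ℝ} {a b : ℝ} (hf : ContinuousOn f (Icc a b))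
    (hf' : ∀ x ∈ Ico a b, HasDerivWithinAt f (f' x) (Ici x) x)
    {B B' : ℝ → ℝ} (ha : ∀ j, f a j ≤ B a) (hB : ContinuousOn B (Icc a b))
    (hB' : ∀ x ∈ Ico a b, HasDerivWithinAt B (B' x) (Ici x) x)
    (bound : ∀ x ∈ Ico a b, (∀ k, f x k ≤ B x) → ∀ j, f x j = B x → f' x j < B' x) :
    ∀ ⦃x⦄, x ∈ Icc a b → ∀ j, f x j ≤ B x := by
  set s := {x | ∀ j, f x j ≤ B x}
  have hs : IsClosed (s ∩ Icc a b) := by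
    rw [inter_comm]
    exact (hf.prodMk (continuousOn_pi.2 fun _ => hB))
      |>.preimage_isClosed_of_isClosed isClosed_Icc OrderClosedTopology.isClosed_le'
  refine fun x hx => hs.Icc_subset_of_forall_mem_nhdsWithin ha (fun x ⟨hxs, hx⟩ => ?_) hx
  refine eventually_all.2 fun j => ?_
  have hgap := ((hasDerivWithinAt_pi.1 (hf' x hx) j).sub (hB' x hx))
  rcases (hxs j).lt_or_eq with hlt | heq
  · have : ∀ᶠ z in 𝓝[≥] x, f z j - B z < 0 :=
      hgap.continuousWithinAt.eventually_lt continuousWithinAt_const (sub_neg.2 hlt)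
    exact (this.filter_mono (nhdsWithin_mono _ Ioi_subset_Ici_self)).mono
      fun z hz => (sub_neg.1 hz).le
  · filter_upwards [hgap.eventually_nhdsGT_lt_of_neg (sub_neg.2 (bound x hx hxs j heq))]
      with z hz
    simp only [Pi.sub_apply, heq, sub_self, sub_neg] at hz
    exact hz.le

def Matrix.IsMetzler {ι R : Type*} [Zero R] [LE R] (A : Matrix ι ι R) : Prop :=
  ∀ i j, i ≠ j → 0 ≤ A i j

theorem Matrix.IsMetzler.mulVec_apply_le {ι : Type*} [Fintype ι] {A : Matrix ι ι ℝ}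
    (hA : A.IsMetzler) {v : ι → ℝ} {c : ℝ} (hc : 0 ≤ c) (hv : ∀ k, v k ≤ c) {j : ι}
    (hj : v j = c) : (A *ᵥ v) j ≤ (∑ k, |A j k|) * c := by
  rw [mulVec, dotProduct, Finset.sum_mul]
  refine Finset.sum_le_sum fun k _ => ?_
  calc A j k * v k ≤ A j k * c := by
        rcases eq_or_ne j k with rfl | hjk
        · rw [hj]
        · exact mul_le_mul_of_nonneg_left (hv k) (hA j k hjk)
    _ ≤ |A j k| * c := mul_le_mul_of_nonneg_right (le_abs_self _) hc

theorem Matrix.IsMetzler.image_nonpos_of_deriv_right_le_mulVec {ι : Type*} [Fintype ι]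
    {A : Matrix ι ι ℝ} (hA : A.IsMetzler) {u u' : ℝ → ι → ℝ} {a b : ℝ}
    (hu : ContinuousOn u (Icc a b))
    (hu' : ∀ x ∈ Ico a b, HasDerivWithinAt u (u' x) (Ici x) x)
    (ha : u a ≤ 0) (bound : ∀ x ∈ Ico a b, u' x ≤ A *ᵥ u x) :
    ∀ ⦃x⦄, x ∈ Icc a b → u x ≤ 0 := by
  set K := 1 + ∑ j, ∑ k, |A j k|
  have hrow (j : ι) : ∑ k, |A j k| < K := by
    have := Finset.single_le_sum (f := fun j => ∑ k, |A j k|)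
      (fun j _ => Finset.sum_nonneg fun k _ => abs_nonneg (A j k)) (Finset.mem_univ j)
    linarith
  have hfence (ε : ℝ) (hε : 0 < ε) :
      ∀ ⦃x⦄, x ∈ Icc a b → ∀ j, u x j ≤ ε * Real.exp (K * (x - a)) := by
    have hB (x : ℝ) : HasDerivAt (fun x => ε * Real.exp (K * (x - a)))
        (K * (ε * Real.exp (K * (x - a)))) x :=
      ((((hasDerivAt_id x).sub_const a).const_mul K).exp.const_mul ε).congr_deriv
        (by simp only [id]; ring)
    refine image_le_of_deriv_right_lt_deriv_boundary_pi hu hu' (fun j => ?_)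
      (fun x _ => (hB x).continuousAt.continuousWithinAt) (fun x _ => (hB x).hasDerivWithinAt)
      (fun x hx hle j hj => ?_)
    · simpa using (ha j).trans hε.le
    · have hpos : 0 < ε * Real.exp (K * (x - a)) := by positivity
      calc u' x j ≤ (A *ᵥ u x) j := bound x hx j
        _ ≤ (∑ k, |A j k|) * (ε * Real.exp (K * (x - a))) := hA.mulVec_apply_le hpos.le hle hj
        _ < K * (ε * Real.exp (K * (x - a))) := mul_lt_mul_of_pos_right (hrow j) hpos
  intro x hx j
  refine le_of_forall_pos_le_add fun ε hε => ?_
  have hexp : 0 < Real.exp (K * (x - a)) := Real.exp_pos _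
  have := hfence (ε / Real.exp (K * (x - a))) (div_pos hε hexp) hx j
  rwa [div_mul_cancel₀ _ hexp.ne', ← zero_add ε] at this

def companionMatrix {R : Type*} [Zero R] [One R] {p : ℕ} (χ : Fin p → R) :
    Matrix (Fin p) (Fin p) R :=
  Matrix.of fun i => if h : (i : ℕ) + 1 < p then Pi.single ⟨i + 1, h⟩ 1 else χ

theorem companionMatrix_mulVec {R : Type*} [NonAssocSemiring R] {p : ℕ} (χ : Fin p → R)
    (v : Fin p → R) (i : Fin p) :
    (companionMatrix χ *ᵥ v) i =
      if h : (i : ℕ) + 1 < p then v ⟨i + 1, h⟩ else ∑ j, χ j * v j := by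
  by_cases h : (i : ℕ) + 1 < p
  · simp [companionMatrix, mulVec, h]
  · simp [companionMatrix, mulVec, h, dotProduct]

theorem isMetzler_companionMatrix {p : ℕ} {χ : Fin p → ℝ}
    (hχ : ∀ i : Fin p, (i : ℕ) + 1 < p → 0 ≤ χ i) : (companionMatrix χ).IsMetzler := by
  intro i j hij
  by_cases h : (i : ℕ) + 1 < p
  · simp only [companionMatrix, of_apply, dif_pos h, Pi.single_apply]
    split_ifs <;> norm_num
  · simpa [companionMatrix, h] using hχ j (by omega)

section LieDerivative

variable {E : Type*} [NormedAddCommGroup E] [NormedSpace ℝ E] {Z : E → E} {g : E → ℝ}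

theorem ContDiff.lieDeriv {n : WithTop ℕ∞} (hg : ContDiff ℝ (n + 1) g) (hZ : ContDiff ℝ n Z) :
    ContDiff ℝ n (lieDeriv Z g) :=
  (hg.fderiv_right le_rfl).clm_apply hZ

theorem contDiff_lieDerivIter {m : WithTop ℕ∞} {k : ℕ} (hg : ContDiff ℝ (m + k + 1) g)
    (hZ : ContDiff ℝ (m + k) Z) : ContDiff ℝ (m + 1) (lieDerivIter Z g k) := by
  induction k generalizing m with
  | zero => simpa only [lieDerivIter, Nat.cast_zero, add_zero] using hg
  | succ k ih =>
    have hmk : m + 1 + k = m + (k + 1 : ℕ) := by push_cast; ring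
    refine ContDiff.lieDeriv (ih (by rwa [hmk]) (by rwa [hmk])) (hZ.of_le ?_)
    exact (le_add_right le_rfl).trans_eq hmk

theorem DifferentiableAt.hasDerivAt_lieDeriv_comp {𝓏 : ℝ → E} {t : ℝ}
    (hg : DifferentiableAt ℝ g (𝓏 t)) (h𝓏 : HasDerivAt 𝓏 (Z (𝓏 t)) t) :
    HasDerivAt (fun s => g (𝓏 s)) (lieDeriv Z g (𝓏 t)) t :=
  hg.hasFDerivAt.comp_hasDerivAt t h𝓏

noncomputable def lieJet (Z : E → E) (g : E → ℝ) (p : ℕ) (z : E) : Fin p → ℝ :=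
  fun i => lieDerivIter Z g i z

theorem hasDerivAt_lieJet_comp {p : ℕ} {𝓏 : ℝ → E} {t : ℝ}
    (hg : ∀ i : Fin p, DifferentiableAt ℝ (lieDerivIter Z g i) (𝓏 t))
    (h𝓏 : HasDerivAt 𝓏 (Z (𝓏 t)) t) :
    HasDerivAt (fun s => lieJet Z g p (𝓏 s)) (fun i => lieDerivIter Z g (i + 1) (𝓏 t)) t :=
  hasDerivAt_pi.2 fun i => (hg i).hasDerivAt_lieDeriv_comp h𝓏

theorem lieDerivIter_succ_le_companionMatrix_mulVec_lieJet {p : ℕ} {χ : Fin p → ℝ} {z : E}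
    (hz : lieDerivIter Z g p z ≤ ∑ i : Fin p, χ i * lieDerivIter Z g i z) (i : Fin p) :
    lieDerivIter Z g (i + 1) z ≤ (companionMatrix χ *ᵥ lieJet Z g p z) i := by
  rw [companionMatrix_mulVec]
  split_ifs with h
  · rfl
  · rwa [show (i : ℕ) + 1 = p by omega]

end LieDerivative

theorem comparison_lemma_triggering_general {d p : ℕ}
    (M : Set (Fin d → ℝ)) (Z : (Fin d → ℝ) → (Fin d → ℝ)) (Γ : (Fin d → ℝ) → ℝ)
    (hZ : ContDiff ℝ ((p - 1 : ℕ) : ℕ∞) Z) (hΓ : ContDiff ℝ ((p : ℕ) : ℕ∞) Γ)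
    (χ : Fin p → ℝ) (hχ : ∀ i : Fin p, (i : ℕ) + 1 < p → 0 ≤ χ i)
    (hineq : ∀ z ∈ M, lieDerivIter Z Γ p z ≤ ∑ i : Fin p, χ i * lieDerivIter Z Γ i z)
    (z₀ : Fin d → ℝ) (T : ℝ)
    (𝓏 : ℝ → (Fin d → ℝ)) (h𝓏0 : 𝓏 0 = z₀)
    (h𝓏deriv : ∀ t ∈ Set.Icc (0 : ℝ) T, HasDerivAt 𝓏 (Z (𝓏 t)) t)
    (h𝓏M : ∀ t ∈ Set.Icc (0 : ℝ) T, 𝓏 t ∈ M)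
    (y : ℝ → Fin p → ℝ)
    (hy0 : ∀ i : Fin p, y 0 i = lieDerivIter Z Γ i z₀)
    (hyderiv : ∀ t ∈ Set.Icc (0 : ℝ) T, ∀ i : Fin p,
      HasDerivAt (fun s => y s i)
        (if h : (i : ℕ) + 1 < p then y t ⟨(i : ℕ) + 1, h⟩
         else ∑ j : Fin p, χ j * y t j) t) :
    ∀ t ∈ Set.Icc (0 : ℝ) T, ∀ i : Fin p, lieDerivIter Z Γ i (𝓏 t) ≤ y t i := by
  have hdiff (i : Fin p) : Differentiable ℝ (lieDerivIter Z Γ i) := by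
    refine (contDiff_lieDerivIter (m := 0) (hΓ.of_le ?_) (hZ.of_le ?_)).differentiable
      one_ne_zero
    · rw [zero_add]; exact_mod_cast (show (i : ℕ) + 1 ≤ p by omega)
    · rw [zero_add]; exact_mod_cast (show (i : ℕ) ≤ p - 1 by omega)
  set A := companionMatrix χ
  have hderiv (t) (ht : t ∈ Icc 0 T) : HasDerivAt (fun s => lieJet Z Γ p (𝓏 s) - y s)
      ((fun i : Fin p => lieDerivIter Z Γ (i + 1) (𝓏 t)) - A *ᵥ y t) t :=
    (hasDerivAt_lieJet_comp (fun i => (hdiff i).differentiableAt) (h𝓏deriv t ht)).sub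
      (hasDerivAt_pi.2 fun i => by simpa only [A, companionMatrix_mulVec] using hyderiv t ht i)
  have hbound (t) (ht : t ∈ Icc 0 T) :
      (fun i : Fin p => lieDerivIter Z Γ (i + 1) (𝓏 t)) - A *ᵥ y t ≤
        A *ᵥ (lieJet Z Γ p (𝓏 t) - y t) := by
    rw [mulVec_sub]
    exact sub_le_sub_right
      (lieDerivIter_succ_le_companionMatrix_mulVec_lieJet (hineq _ (h𝓏M t ht))) _
  intro t ht i
  refine sub_nonpos.1 ((isMetzler_companionMatrix hχ).image_nonpos_of_deriv_right_le_mulVec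
    (fun s hs => (hderiv s hs).continuousAt.continuousWithinAt)
    (fun s hs => (hderiv s (Ico_subset_Icc_self hs)).hasDerivWithinAt) ?_
    (fun s hs => hbound s (Ico_subset_Icc_self hs)) ht i)
  rw [h𝓏0, show y 0 = lieJet Z Γ p z₀ from funext hy0, sub_self]

/-- Lemma 2 (linear comparison bound for the triggering condition).  If the coefficients
`χ₀, …, χ_{p-1}`, with `χ_i ≥ 0` for `i ≤ p - 2`, satisfy the differential inequality
`L_Z^p Γ ≤ Σ_i χ_i L_Z^i Γ` on `M`, the solution `𝓏` of `ż = Z z` starting at `z₀`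
stays in `M` on `[0, T]`, and `y` solves the companion linear system
`ẏ_i = y_{i+1}` (`i < p - 1`), `ẏ_{p-1} = Σ_j χ_j y_j`, with initial condition
`y 0 = (Γ z₀, L_Z Γ z₀, …, L_Z^{p-1} Γ z₀)`, then `L_Z^i Γ (𝓏 t) ≤ y t i` for all
`t ∈ [0, T]` and all `i`; in particular `Γ (𝓏 t) ≤ y t 0`. -/
theorem comparison_lemma_triggering {d p : ℕ} (hp : 0 < p)
    (M : Set (Fin d → ℝ)) (Z : (Fin d → ℝ) → (Fin d → ℝ)) (Γ : (Fin d → ℝ) → ℝ)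
    (hZ : ContDiff ℝ ((p - 1 : ℕ) : ℕ∞) Z) (hΓ : ContDiff ℝ ((p : ℕ) : ℕ∞) Γ)
    (χ : Fin p → ℝ) (hχ : ∀ i : Fin p, (i : ℕ) + 1 < p → 0 ≤ χ i)
    (hineq : ∀ z ∈ M, lieDerivIter Z Γ p z ≤ ∑ i : Fin p, χ i * lieDerivIter Z Γ i z)
    (z₀ : Fin d → ℝ) (T : ℝ) (hT : 0 ≤ T)
    (𝓏 : ℝ → (Fin d → ℝ)) (h𝓏0 : 𝓏 0 = z₀)
    (h𝓏deriv : ∀ t ∈ Set.Icc (0 : ℝ) T, HasDerivAt 𝓏 (Z (𝓏 t)) t)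
    (h𝓏M : ∀ t ∈ Set.Icc (0 : ℝ) T, 𝓏 t ∈ M)
    (y : ℝ → Fin p → ℝ)
    (hy0 : ∀ i : Fin p, y 0 i = lieDerivIter Z Γ i z₀)
    (hyderiv : ∀ t ∈ Set.Icc (0 : ℝ) T, ∀ i : Fin p,
      HasDerivAt (fun s => y s i)
        (if h : (i : ℕ) + 1 < p then y t ⟨(i : ℕ) + 1, h⟩
         else ∑ j : Fin p, χ j * y t j) t) :
    ∀ t ∈ Set.Icc (0 : ℝ) T, ∀ i : Fin p, lieDerivIter Z Γ i (𝓏 t) ≤ y t i :=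
  comparison_lemma_triggering_general M Z Γ hZ hΓ χ hχ hineq z₀ T 𝓏 h𝓏0 h𝓏deriv h𝓏M y hy0 hyderiv
end
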